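/- Let (X,L) be a 2-edge-connected convex geometry with lattice of closed sets ℒ = (𝒞, ⊆). Then the order dimension of ℒ is at least the chromatic number of the copoint graph 𝒢((X,L)): dim(ℒ) ≥ χ(𝒢((X,L))). -/

import Mathlib

structure ConvexGeom (α : Type*) [DecidableEq α] where
  X : Finset α
  sets : Finset (Finset α)
  subset_ground : ∀ A ∈ sets, A ⊆ X
  empty_mem : ∅ ∈ sets
  ground_mem : X ∈ sets
  inter_mem : ∀ A ∈ sets, ∀ B ∈ sets, A ∩ B ∈ sets
  anti_exchange : ∀ C ∈ sets, ∀ p ∈ X, ∀ q ∈ X, p ∉ C → q ∉ C → p ≠ q →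
    (∀ A ∈ sets, insert p C ⊆ A → q ∈ A) → ¬ (∀ A ∈ sets, insert q C ⊆ A → p ∈ A)

variable {α : Type*} [DecidableEq α]

def ConvexGeom.cl (G : ConvexGeom α) (S : Finset α) : Finset α :=
  G.X.filter (fun x => ∀ A ∈ G.sets, S ⊆ A → x ∈ A)

def ConvexGeom.IsCopoint (G : ConvexGeom α) (A : Finset α) : Prop :=
  A ∈ G.sets ∧ ∃! B, B ∈ G.sets ∧ (B \ A).card = 1

def ConvexGeom.Attached (G : ConvexGeom α) (A : Finset α) (p : α) : Prop :=
  G.IsCopoint A ∧ ∃ B ∈ G.sets, B \ A = {p}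

/-- A cycle of copoints `(A 0, …, A (l-1))` with attachment points `a i = α(A i)`:
the copoints are pairwise distinct and `α(A i) ∈ A (i+1)` cyclically. -/
def ConvexGeom.IsCycle (G : ConvexGeom α) {l : ℕ} (A : Fin l → Finset α) (a : Fin l → α) : Prop :=
  Function.Injective A ∧ (∀ i, G.Attached (A i) (a i)) ∧
  ∀ i : Fin l, a i ∈ A ⟨(i.1 + 1) % l, Nat.mod_lt _ i.pos⟩

/-- A minimal cycle of copoints: no nonempty proper subfamily of its copoints can be
arranged into a cycle of copoints. -/
def ConvexGeom.IsMinCycle (G : ConvexGeom α) {l : ℕ} (A : Fin l → Finset α) (a : Fin l → α) :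
    Prop :=
  G.IsCycle A a ∧ ∀ (m : ℕ) (B : Fin m → Finset α) (b : Fin m → α),
    0 < m → G.IsCycle B b → ¬ Set.range B ⊂ Set.range A

/-- The copoint graph `𝒢((X,L))`: vertices are the copoints, two distinct copoints `A`, `B`
are adjacent iff `α(A) ∈ B` and `α(B) ∈ A`. -/
def ConvexGeom.copointGraph (G : ConvexGeom α) : SimpleGraph {A : Finset α // G.IsCopoint A} where
  Adj A B := A ≠ B ∧ (∃ p, G.Attached A.1 p ∧ p ∈ B.1) ∧ (∃ q, G.Attached B.1 q ∧ q ∈ A.1)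
  symm := ⟨fun A B h => ⟨h.1.symm, h.2.2, h.2.1⟩⟩
  loopless := ⟨fun A h => h.1 rfl⟩

def ConvexGeom.CriticalPair (G : ConvexGeom α) (A B : Finset α) : Prop :=
  A ∈ G.sets ∧ B ∈ G.sets ∧ ¬ A ⊆ B ∧ ¬ B ⊆ A ∧
  (∀ U ∈ G.sets, B ⊂ U → A ⊂ U) ∧ (∀ D ∈ G.sets, D ⊂ A → D ⊂ B)

/-- The graph `G^C_ℒ`: vertices are the critical pairs of the lattice of closed sets, and
two distinct critical pairs are adjacent iff they form a directed 2-cycle of the critical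
digraph (where `(A,B) → (C,D)` iff `C ⊆ B`). -/
def ConvexGeom.critGraph (G : ConvexGeom α) :
    SimpleGraph {P : Finset α × Finset α // G.CriticalPair P.1 P.2} where
  Adj P Q := P ≠ Q ∧ Q.1.1 ⊆ P.1.2 ∧ P.1.1 ⊆ Q.1.2
  symm := ⟨fun P Q h => ⟨h.1.symm, h.2.2, h.2.1⟩⟩
  loopless := ⟨fun P h => h.1 rfl⟩

/-- The lattice of closed sets has a realizer of size `t`: `t` linear extensions of the
inclusion order on closed sets whose intersection is the inclusion order. -/
def ConvexGeom.HasRealizer (G : ConvexGeom α) (t : ℕ) : Prop :=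
  ∃ r : Fin t → ({A : Finset α // A ∈ G.sets} → {A : Finset α // A ∈ G.sets} → Prop),
    (∀ i, IsLinearOrder _ (r i)) ∧
    (∀ i A B, A.1 ⊆ B.1 → r i A B) ∧
    (∀ A B, (∀ i, r i A B) → A.1 ⊆ B.1)

/-- The order dimension of the lattice of closed sets: the least positive `t` admitting
a realizer of size `t`. -/
noncomputable def ConvexGeom.orderDim (G : ConvexGeom α) : ℕ :=
  sInf {t : ℕ | 0 < t ∧ G.HasRealizer t}

/-- `S` is an independent set of the convex geometry: `p ∉ L(S \ {p})` for all `p ∈ S`. -/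
def ConvexGeom.Indep (G : ConvexGeom α) (S : Finset α) : Prop :=
  S ⊆ G.X ∧ ∀ p ∈ S, p ∉ G.cl (S.erase p)


/-- The Hasse diagram of the lattice of closed sets, viewed as an undirected graph:
closed sets `A`, `B` are adjacent iff one covers the other in the inclusion order. -/
def ConvexGeom.hasse (G : ConvexGeom α) : SimpleGraph {A : Finset α // A ∈ G.sets} where
  Adj A B := (A.1 ⊂ B.1 ∧ ∀ C ∈ G.sets, ¬ (A.1 ⊂ C ∧ C ⊂ B.1)) ∨
             (B.1 ⊂ A.1 ∧ ∀ C ∈ G.sets, ¬ (B.1 ⊂ C ∧ C ⊂ A.1))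
  symm := ⟨fun A B h => h.symm⟩
  loopless := ⟨fun A h => by
    rcases h with ⟨h, -⟩ | ⟨h, -⟩ <;> exact lt_irrefl _ h⟩

/-!
Let `L₁, …, L_t` be a realizer of the lattice of closed sets. For a copoint `A` with attachment
point `p = α(A)` the closed set `L({p})` is not contained in `A`, so some `L_i` puts `A` below
`L({p})`; colour `A` by such an `i`. If adjacent copoints `A`, `B` got the same colour `i`, then
`α(A) ∈ B` and `α(B) ∈ A` give `A <ᵢ L({α(A)}) ≤ B <ᵢ L({α(B)}) ≤ A` in `L_i`, a contradiction.
-/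

section Realizer

variable {β : Type*} [PartialOrder β]

theorem exists_linearExtension_of_not_le {a b : β} (h : ¬ a ≤ b) :
    ∃ s : β → β → Prop, IsLinearOrder β s ∧ (∀ x y, x ≤ y → s x y) ∧ s b a := by
  -- adjoin the relation `b ≤ a` to the order and take its transitive closure
  let r : β → β → Prop := fun x y => x ≤ y ∨ (x ≤ b ∧ a ≤ y)
  have : IsPartialOrder β r :=
    { refl := fun x => Or.inl le_rfl
      trans := by
        rintro x y z (hxy | ⟨hxb, hay⟩) (hyz | ⟨hyb, haz⟩)
        · exact Or.inl (hxy.trans hyz)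
        · exact Or.inr ⟨hxy.trans hyb, haz⟩
        · exact Or.inr ⟨hxb, hay.trans hyz⟩
        · exact absurd (hay.trans hyb) h
      antisymm := by
        rintro x y (hxy | ⟨hxb, hay⟩) (hyx | ⟨hyb, hax⟩)
        · exact le_antisymm hxy hyx
        · exact absurd ((hax.trans hxy).trans hyb) h
        · exact absurd ((hay.trans hyx).trans hxb) h
        · exact absurd (hay.trans hyb) h }
  obtain ⟨s, hlin, hrs⟩ := extend_partialOrder r
  exact ⟨s, hlin, fun x y hxy => hrs x y (Or.inl hxy), hrs b a (Or.inr ⟨le_rfl, le_rfl⟩)⟩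

theorem exists_realizer [Finite β] [Nonempty β] :
    ∃ t, 0 < t ∧ ∃ r : Fin t → β → β → Prop, (∀ i, IsLinearOrder β (r i)) ∧
      (∀ i x y, x ≤ y → r i x y) ∧ ∀ x y, (∀ i, r i x y) → x ≤ y := by
  have hpair : ∀ p : β × β, ∃ s : β → β → Prop, IsLinearOrder β s ∧
      (∀ x y, x ≤ y → s x y) ∧ (¬ p.1 ≤ p.2 → s p.2 p.1) := by
    rintro ⟨a, b⟩
    by_cases h : a ≤ b
    · obtain ⟨s, hlin, hext⟩ := extend_partialOrder (α := β) (· ≤ ·)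
      exact ⟨s, hlin, hext, fun h' => absurd h h'⟩
    · obtain ⟨s, hlin, hext, hba⟩ := exists_linearExtension_of_not_le h
      exact ⟨s, hlin, hext, fun _ => hba⟩
  choose s hlin hext hswap using hpair
  let e := Finite.equivFin (β × β)
  refine ⟨_, Nat.card_pos, fun i => s (e.symm i), fun i => hlin _, fun i => hext _, ?_⟩
  intro x y hxy
  by_contra h
  have hs : s (x, y) x y := by simpa using hxy (e (x, y))
  have := hlin (x, y)
  exact h (antisymm hs (hswap (x, y) h)).le

theorem SimpleGraph.colorable_of_realizer {V : Type*} (H : SimpleGraph V) {t : ℕ}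
    (r : Fin t → β → β → Prop) (hlin : ∀ i, IsLinearOrder β (r i))
    (hext : ∀ i x y, x ≤ y → r i x y) (hreal : ∀ x y, (∀ i, r i x y) → x ≤ y)
    (a c : V → β) (hca : ∀ v, ¬ c v ≤ a v) (hadj : ∀ u v, H.Adj u v → c u ≤ a v) :
    H.Colorable t := by
  have hcol : ∀ v, ∃ i, r i (a v) (c v) := fun v => by
    by_contra! h
    exact hca v (hreal _ _ fun i => ((hlin i).total _ _).resolve_right (h i))
  choose col hcol using hcol
  refine ⟨SimpleGraph.Coloring.mk col fun {u v} huv hsame => ?_⟩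
  have := hlin (col u)
  have hvu : r (col u) (a v) (a u) :=
    _root_.trans (hsame ▸ hcol v) (hext _ _ _ (hadj v u huv.symm))
  have hcu : r (col u) (c u) (a u) := _root_.trans (hext _ _ _ (hadj u v huv)) hvu
  exact hca u (antisymm (hcol u) hcu).ge

end Realizer

namespace ConvexGeom

variable (G : ConvexGeom α)

theorem inf'_mem_sets {F : Finset (Finset α)} (hF : F.Nonempty) (h : ∀ A ∈ F, A ∈ G.sets) :
    F.inf' hF id ∈ G.sets :=
  Finset.inf'_induction hF id G.inter_mem h

theorem cl_mem_sets (S : Finset α) : G.cl S ∈ G.sets := by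
  let F := insert G.X (G.sets.filter (S ⊆ ·))
  have hF : ∀ A ∈ F, A ∈ G.sets := by
    simp only [F, Finset.mem_insert, Finset.mem_filter]
    rintro A (rfl | ⟨hA, -⟩)
    exacts [G.ground_mem, hA]
  suffices G.cl S = F.inf' (Finset.insert_nonempty _ _) id from this ▸ G.inf'_mem_sets _ hF
  apply le_antisymm
  · refine Finset.le_inf' _ _ fun A hA x hx => ?_
    obtain ⟨hxX, hxA⟩ := Finset.mem_filter.1 hx
    rcases Finset.mem_insert.1 hA with rfl | hA
    · exact hxX
    · exact hxA A (Finset.mem_filter.1 hA).1 (Finset.mem_filter.1 hA).2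
  · intro x hx
    refine Finset.mem_filter.2
      ⟨Finset.mem_of_subset (Finset.inf'_le id (Finset.mem_insert_self _ _)) hx, fun A hA hSA => ?_⟩
    exact Finset.mem_of_subset
      (Finset.inf'_le id (Finset.mem_insert_of_mem (Finset.mem_filter.2 ⟨hA, hSA⟩))) hx

theorem mem_cl_singleton {p : α} (hp : p ∈ G.X) : p ∈ G.cl {p} :=
  Finset.mem_filter.2 ⟨hp, fun _ _ h => Finset.singleton_subset_iff.1 h⟩

theorem cl_singleton_subset {p : α} {B : Finset α} (hB : B ∈ G.sets) (hpB : p ∈ B) :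
    G.cl {p} ⊆ B := fun _ hx =>
  (Finset.mem_filter.1 hx).2 B hB (Finset.singleton_subset_iff.2 hpB)

theorem hasRealizer_orderDim : G.HasRealizer G.orderDim :=
  haveI : Nonempty {A : Finset α // A ∈ G.sets} := ⟨⟨∅, G.empty_mem⟩⟩
  (Nat.sInf_mem (exists_realizer (β := {A : Finset α // A ∈ G.sets}))).2

variable {G}

theorem IsCopoint.exists_attached {A : Finset α} (hA : G.IsCopoint A) : ∃ p, G.Attached A p := by
  obtain ⟨B, ⟨hB, hcard⟩, -⟩ := hA.2
  obtain ⟨p, hp⟩ := Finset.card_eq_one.1 hcard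
  exact ⟨p, hA, B, hB, hp⟩

namespace Attached

variable {A : Finset α} {p : α}

theorem notMem (h : G.Attached A p) : p ∉ A := by
  obtain ⟨-, B, -, hBA⟩ := h
  exact (Finset.mem_sdiff.1 (hBA ▸ Finset.mem_singleton_self p)).2

theorem mem_ground (h : G.Attached A p) : p ∈ G.X := by
  obtain ⟨-, B, hB, hBA⟩ := h
  exact G.subset_ground B hB (Finset.mem_sdiff.1 (hBA ▸ Finset.mem_singleton_self p)).1

theorem unique {q : α} (hp : G.Attached A p) (hq : G.Attached A q) : p = q := by
  obtain ⟨⟨-, B₀, -, huniq⟩, B, hB, hBA⟩ := hp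
  obtain ⟨-, C, hC, hCA⟩ := hq
  have hB₀ : B = B₀ := huniq B ⟨hB, by rw [hBA, Finset.card_singleton]⟩
  have hC₀ : C = B₀ := huniq C ⟨hC, by rw [hCA, Finset.card_singleton]⟩
  exact Finset.singleton_injective (by rw [← hBA, ← hCA, hB₀, hC₀])

end Attached

theorem cl_attached_subset_of_adj {u v : {A : Finset α // G.IsCopoint A}} {p : α}
    (huv : G.copointGraph.Adj u v) (hp : G.Attached u.1 p) : G.cl {p} ⊆ v.1 := by
  obtain ⟨-, ⟨q, hq, hqv⟩, -⟩ := huv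
  exact G.cl_singleton_subset v.2.1 (hp.unique hq ▸ hqv)

end ConvexGeom

theorem chromaticNumber_copointGraph_le_orderDim_general (G : ConvexGeom α) :
    G.copointGraph.chromaticNumber ≤ (G.orderDim : ℕ∞) := by
  obtain ⟨r, hlin, hext, hreal⟩ := G.hasRealizer_orderDim
  choose p hp using fun v : {A : Finset α // G.IsCopoint A} => v.2.exists_attached
  refine SimpleGraph.Colorable.chromaticNumber_le <|
    G.copointGraph.colorable_of_realizer r hlin hext hreal
      (fun v => ⟨v.1, v.2.1⟩) (fun v => ⟨G.cl {p v}, G.cl_mem_sets _⟩) ?_ ?_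
  · exact fun v hsub => (hp v).notMem (hsub (G.mem_cl_singleton (hp v).mem_ground))
  · exact fun u v huv => ConvexGeom.cl_attached_subset_of_adj huv (hp u)

/-- For a 2-edge-connected convex geometry, the order dimension of the
lattice of closed sets is at least the chromatic number of the copoint graph. -/
theorem chromaticNumber_copointGraph_le_orderDim (G : ConvexGeom α)
    (h2ec : ∀ e, ¬ G.hasse.IsBridge e) :
    G.copointGraph.chromaticNumber ≤ (G.orderDim : ℕ∞) :=
  chromaticNumber_copointGraph_le_orderDim_general G
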